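/- arXiv:1104.0321 — 8 statements merged into one kernel-verified Lean document; each statement's English description precedes it below -/
import Mathlib

section
/- Let A be a Noetherian local ring with maximal ideal m that is m-adically complete. If M is an A-module that is m-adically separated (i.e. the intersection of the submodules m^n M over all n is zero) and M/mM is a finite-dimensional vector space over A/m, then M is a finitely generated A-module. -/
/-!
Lift a finite generating family of `M/mM` to `M`. The induced map `A^k → M` is surjective
modulo `m`, hence modulo every `m^n`; since `A^k` is `m`-adically precomplete, successive
approximations of a preimage converge, and separatedness of `M` makes the limit an actual
preimage.
-/

open Submodule

section

variable {R : Type*} [CommRing R] {I : Ideal R}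

variable (I) in
theorem Submodule.smul_top_pi_eq {ι : Type*} [Finite ι] {M : ι → Type*}
    [∀ i, AddCommGroup (M i)] [∀ i, Module R (M i)] :
    (I • ⊤ : Submodule R (Π i, M i)) = pi Set.univ fun _ ↦ I • ⊤ := by
  refine le_antisymm (smul_le.2 fun r hr x _ i _ ↦ smul_mem_smul hr trivial) fun x hx ↦ ?_
  classical
  cases nonempty_fintype ι
  rw [← Finset.univ_sum_single x]
  exact sum_mem fun i _ ↦ smul_top_le_comap_smul_top I (LinearMap.single R M i) (hx i trivial)

instance IsPrecomplete.pi {ι : Type*} [Finite ι] {M : ι → Type*}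
    [∀ i, AddCommGroup (M i)] [∀ i, Module R (M i)] [∀ i, IsPrecomplete I (M i)] :
    IsPrecomplete I (Π i, M i) where
  prec' f hf := by
    simp only [SModEq.sub_mem, smul_top_pi_eq, mem_pi, Set.mem_univ, true_implies,
      Pi.sub_apply] at hf ⊢
    choose L hL using fun i ↦ IsPrecomplete.prec inferInstance
      (f := fun n ↦ f n i) fun hmn ↦ SModEq.sub_mem.2 (hf hmn i)
    exact ⟨L, fun n i ↦ SModEq.sub_mem.1 (hL i n)⟩

theorem IsHausdorff.of_iInf_pow_smul_eq_bot {M : Type*} [AddCommGroup M] [Module R M]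
    (h : (⨅ n : ℕ, I ^ n • ⊤ : Submodule R M) = ⊥) : IsHausdorff I M :=
  ⟨fun _ hx ↦ (mem_bot R).1 <| h ▸ (mem_iInf _).2 fun n ↦ SModEq.zero.1 (hx n)⟩

theorem Module.Finite.of_finite_quotient_smul_top [IsPrecomplete I R] {M : Type*}
    [AddCommGroup M] [Module R M] [IsHausdorff I M]
    [Module.Finite R (M ⧸ (I • ⊤ : Submodule R M))] : Module.Finite R M := by
  obtain ⟨n, f, hf⟩ := Module.Finite.exists_fin' R (M ⧸ (I • ⊤ : Submodule R M))
  obtain ⟨g, hg⟩ := Module.projective_lifting_property (I • ⊤ : Submodule R M).mkQ f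
    (mkQ_surjective _)
  exact .of_surjective g (surjective_of_mkQ_comp_surjective (I := I) (hg ▸ hf))

end

theorem complete_nakayama_general
    (A : Type*) [CommRing A] [IsLocalRing A]
    [IsAdicComplete (IsLocalRing.maximalIdeal A) A]
    (M : Type*) [AddCommGroup M] [Module A M]
    (hsep : (⨅ n : ℕ, (IsLocalRing.maximalIdeal A ^ n) • (⊤ : Submodule A M)) = ⊥)
    (hfin : Module.Finite (A ⧸ IsLocalRing.maximalIdeal A)
      (M ⧸ (IsLocalRing.maximalIdeal A • (⊤ : Submodule A M)))) :
    Module.Finite A M := by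
  have := IsHausdorff.of_iInf_pow_smul_eq_bot hsep
  have := Module.Finite.trans (R := A) (A ⧸ IsLocalRing.maximalIdeal A)
    (M ⧸ (IsLocalRing.maximalIdeal A • (⊤ : Submodule A M)))
  exact Module.Finite.of_finite_quotient_smul_top (I := IsLocalRing.maximalIdeal A)

/-- Let `A` be a Noetherian local ring with maximal ideal `m` that is
`m`-adically complete.  If `M` is an `m`-adically separated `A`-module (the intersection of
the submodules `m^n • M` is zero) whose reduction `M/mM` is a finite-dimensional vector
space over the residue field `A/m`, then `M` is a finitely generated `A`-module. -/
theorem complete_nakayama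
    (A : Type*) [CommRing A] [IsNoetherianRing A] [IsLocalRing A]
    [IsAdicComplete (IsLocalRing.maximalIdeal A) A]
    (M : Type*) [AddCommGroup M] [Module A M]
    (hsep : (⨅ n : ℕ, (IsLocalRing.maximalIdeal A ^ n) • (⊤ : Submodule A M)) = ⊥)
    (hfin : Module.Finite (A ⧸ IsLocalRing.maximalIdeal A)
      (M ⧸ (IsLocalRing.maximalIdeal A • (⊤ : Submodule A M)))) :
    Module.Finite A M :=
  complete_nakayama_general A M hsep hfin
end

section
/- Let A be a Noetherian local ring with maximal ideal m, and let M be an A-submodule of a direct sum of finitely generated A-modules. If M/mM is a finite-dimensional vector space over the residue field A/m, then M is finitely generated over A. -/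
open DirectSum


private lemma aux_sup_pow_smul {A : Type*} [CommRing A] {M : Type*} [AddCommGroup M]
    [Module A M] (m : Ideal A) (N : Submodule A M) (h : N ⊔ m • ⊤ = ⊤) (k : ℕ) :
    N ⊔ m ^ k • ⊤ = ⊤ := by
  induction k with
  | zero => simp
  | succ k ih =>
    have heq : (m ^ k • ⊤ : Submodule A M) ≤ N ⊔ m ^ (k + 1) • ⊤ := by
      conv_lhs => rw [← h, Submodule.smul_sup]
      refine sup_le (Submodule.smul_le_right.trans le_sup_left) ?_
      rw [pow_succ, ← smul_eq_mul, Submodule.smul_assoc]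
      exact le_sup_right
    rw [eq_top_iff]
    conv_lhs => rw [← ih]
    exact sup_le le_sup_left heq


private lemma aux_krull {A : Type*} [CommRing A] [IsNoetherianRing A] [IsLocalRing A]
    {Q : Type*} [AddCommGroup Q] [Module A Q] [Module.Finite A Q]
    (x : Q) (hx : ∀ k : ℕ, x ∈ (IsLocalRing.maximalIdeal A ^ k • ⊤ : Submodule A Q)) :
    x = 0 := by
  obtain ⟨n, φ, hφ⟩ := Module.Finite.exists_fin' A Q
  set K := LinearMap.ker φ with hK
  set e : ((Fin n → A) ⧸ K) ≃ₗ[A] Q := φ.quotKerEquivOfSurjective hφ with he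
  have h1 : ∀ k : ℕ, e.symm x ∈
      (IsLocalRing.maximalIdeal A ^ k • ⊤ : Submodule A ((Fin n → A) ⧸ K)) := by
    intro k
    have h := Submodule.mem_map_of_mem (f := e.symm.toLinearMap) (hx k)
    rwa [Submodule.map_smul'', Submodule.map_top, LinearEquiv.range] at h
  have h2 : e.symm x ∈
      (⨅ k : ℕ, (IsLocalRing.maximalIdeal A ^ k • ⊤ : Submodule A ((Fin n → A) ⧸ K))) :=
    Submodule.mem_iInf _ |>.mpr h1
  have h3 := Ideal.iInf_pow_smul_eq_bot_of_isLocalRing (R := A) (M := (Fin n → A) ⧸ K)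
    (I := IsLocalRing.maximalIdeal A) (IsLocalRing.maximalIdeal.isMaximal A).ne_top
  rw [h3, Submodule.mem_bot] at h2
  have := congrArg e h2
  simpa using this

set_option maxHeartbeats 1000000 in
/-- Let `A` be a Noetherian local ring with maximal ideal `m`, and let `M` be
an `A`-submodule of a direct sum of finitely generated `A`-modules.  If `M/mM` is a
finite-dimensional vector space over the residue field `A/m`, then `M` is finitely
generated over `A`. -/
theorem fg_of_submodule_of_directSum
    (A : Type*) [CommRing A] [IsNoetherianRing A] [IsLocalRing A]
    (ι : Type*) (X : ι → Type*) [∀ i, AddCommGroup (X i)] [∀ i, Module A (X i)]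
    [∀ i, Module.Finite A (X i)]
    (M : Submodule A (⨁ i, X i))
    (hfin : Module.Finite (A ⧸ IsLocalRing.maximalIdeal A)
      (M ⧸ (IsLocalRing.maximalIdeal A • (⊤ : Submodule A M)))) :
    Module.Finite A M := by
  classical
  set m : Ideal A := IsLocalRing.maximalIdeal A with hm
  set p : Submodule A M := m • (⊤ : Submodule A M) with hp
  haveI : Module.Finite A (M ⧸ p) := Module.Finite.trans (A ⧸ m) _
  obtain ⟨s, hs⟩ := (Module.finite_def.mp inferInstance : (⊤ : Submodule A (M ⧸ p)).FG)
  have hsurj := p.mkQ_surjective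
  choose g hg using hsurj
  set N : Submodule A M := Submodule.span A (g '' ↑s) with hN
  have hNfg : N.FG := Submodule.fg_span ((s.finite_toSet).image g)
  have hmap : N.map p.mkQ = ⊤ := by
    rw [hN, Submodule.map_span, Set.image_image]
    have h2 : (fun x => p.mkQ (g x)) '' ↑s = ↑s := by
      rw [Set.image_congr (fun x _ => hg x), Set.image_id']
    rw [h2, hs]
  have hsup : N ⊔ p = ⊤ := by
    have h := Submodule.comap_map_eq p.mkQ N
    rw [hmap, Submodule.comap_top, Submodule.ker_mkQ] at h
    exact h.symm
  have hpow : ∀ k : ℕ, N ⊔ (m ^ k • ⊤ : Submodule A M) = ⊤ :=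
    aux_sup_pow_smul m N (hp ▸ hsup)
  -- it suffices to show that `M = N`
  suffices htop : (⊤ : Submodule A M) ≤ N by
    rw [Module.finite_def, ← top_le_iff.mp htop]
    exact hNfg
  intro x _
  -- pass to the ambient direct sum
  set N' : Submodule A (⨁ i, X i) := N.map M.subtype with hN'
  obtain ⟨t, ht⟩ := hNfg.map M.subtype
  set S : Finset ι := DFinsupp.support (M.subtype x) ∪ t.sup (fun y => DFinsupp.support y)
    with hS
  set F : Submodule A (⨁ i, X i) := ⨆ i ∈ S, LinearMap.range (lof A ι X i) with hF
  have hmemF : ∀ y : ⨁ i, X i, DFinsupp.support y ⊆ S → y ∈ F := by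
    intro y hy
    rw [← DirectSum.sum_support_of y]
    refine Submodule.sum_mem _ fun i hi => ?_
    exact Submodule.mem_iSup_of_mem i (Submodule.mem_iSup_of_mem (hy hi) ⟨y i, rfl⟩)
  have hxF : M.subtype x ∈ F := hmemF _ (hS ▸ Finset.subset_union_left)
  have hN'F : N' ≤ F := by
    rw [hN', ← ht, Submodule.span_le]
    intro y hy
    exact hmemF y (le_trans (Finset.le_sup hy) Finset.subset_union_right)
  have hFfg : F.FG := by
    refine Submodule.fg_biSup S _ fun i _ => ?_
    rw [← Submodule.map_top]
    exact (Module.finite_def.mp inferInstance : (⊤ : Submodule A (X i)).FG).map _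
  -- the projection onto the coordinates in `S`
  set π : (⨁ i, X i) →ₗ[A] (⨁ i, X i) :=
    ∑ i ∈ S, (lof A ι X i).comp (component A ι X i) with hπ
  have hπ_mem : ∀ y, π y ∈ F := by
    intro y
    rw [hπ, LinearMap.sum_apply]
    refine Submodule.sum_mem _ fun i hi => ?_
    exact Submodule.mem_iSup_of_mem i (Submodule.mem_iSup_of_mem hi ⟨_, rfl⟩)
  have hπ_fix : ∀ y ∈ F, π y = y := by
    have hle : F ≤ LinearMap.eqLocus π LinearMap.id := by
      refine iSup₂_le fun i hi => ?_
      rintro _ ⟨v, rfl⟩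
      show π (lof A ι X i v) = LinearMap.id (lof A ι X i v)
      rw [LinearMap.id_apply, hπ, LinearMap.sum_apply]
      rw [Finset.sum_eq_single i]
      · simp
      · intro j hj hne
        rw [LinearMap.comp_apply, component.of, dif_neg (fun h => hne h.symm), map_zero]
      · exact fun h => absurd hi h
    exact fun y hy => hle hy
  have hrange : ∀ (Z : Submodule A (⨁ i, X i)), Z.map π ≤ F :=
    fun Z => Submodule.map_le_iff_le_comap.mpr (fun z _ => hπ_mem z)
  -- key: x lies in N' + m^k • F for all k
  have key : ∀ k : ℕ, M.subtype x ∈ N' ⊔ m ^ k • F := by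
    intro k
    have h1 : M.subtype x ∈ (N ⊔ (m ^ k • ⊤ : Submodule A M)).map M.subtype := by
      rw [hpow k]
      exact ⟨x, trivial, rfl⟩
    rw [Submodule.map_sup, Submodule.map_smul''] at h1
    obtain ⟨a, ha, b, hb, hab⟩ := Submodule.mem_sup.mp h1
    rw [← hπ_fix _ hxF, ← hab, map_add]
    refine Submodule.add_mem_sup ?_ ?_
    · rw [hπ_fix a (hN'F ha)]; exact ha
    · have h2 : π b ∈ ((m ^ k • (⊤ : Submodule A M).map M.subtype)).map π :=
        Submodule.mem_map_of_mem hb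
      rw [Submodule.map_smul''] at h2
      exact Submodule.smul_mono le_rfl (hrange _) h2
  -- now apply Krull's intersection theorem inside `F`
  haveI : Module.Finite A F := Module.Finite.iff_fg.mpr hFfg
  set N'' : Submodule A F := N'.comap F.subtype with hN''
  haveI : Module.Finite A (F ⧸ N'') := Module.Finite.of_surjective N''.mkQ N''.mkQ_surjective
  set x'' : F := ⟨M.subtype x, hxF⟩ with hx''
  have hker : ∀ k : ℕ, N''.mkQ x'' ∈ (m ^ k • ⊤ : Submodule A (F ⧸ N'')) := by
    intro k
    obtain ⟨a, ha, b, hb, hab⟩ := Submodule.mem_sup.mp (key k)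
    have hbF : b ∈ Submodule.map F.subtype (m ^ k • ⊤ : Submodule A F) := by
      rwa [Submodule.map_smul'', Submodule.map_top, Submodule.range_subtype]
    obtain ⟨b'', hb'', hbeq⟩ := hbF
    have hsub : x'' - b'' ∈ N'' := by
      refine Submodule.mem_comap.mpr ?_
      have hcoe : F.subtype (x'' - b'') = a := by
        simp only [map_sub]
        have h4 : F.subtype x'' = M.subtype x := rfl
        have h5 : F.subtype b'' = b := hbeq
        rw [h4, h5, ← hab, add_sub_cancel_right]
      rw [hcoe]
      exact ha
    have h6 : N''.mkQ x'' = N''.mkQ b'' := by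
      rw [← sub_eq_zero, ← map_sub, Submodule.mkQ_apply]
      exact (Submodule.Quotient.mk_eq_zero _).mpr hsub
    rw [h6]
    have h3 : N''.mkQ b'' ∈ (m ^ k • ⊤ : Submodule A F).map N''.mkQ :=
      Submodule.mem_map_of_mem hb''
    rwa [Submodule.map_smul'', Submodule.map_top, Submodule.range_mkQ] at h3
  have hbot : N''.mkQ x'' = 0 := aux_krull (N''.mkQ x'') (hm ▸ hker)
  have hxN' : M.subtype x ∈ N' := by
    have hx'' : x'' ∈ N'' := by
      rw [← Submodule.ker_mkQ N'']
      exact LinearMap.mem_ker.mpr hbot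
    exact hx''
  obtain ⟨y, hy, hyx⟩ := hxN'
  have : y = x := Subtype.ext hyx
  rwa [← this]
end

section
/- Let A be a Noetherian local ring with maximal ideal m, and let M be an A-submodule of a direct sum of finitely generated A-modules. If M/mM = 0, then M = 0. -/
open DirectSum

/-! Each coordinate projection of `M` is a submodule of a finitely generated module over a
Noetherian ring, hence finitely generated, and it is again fixed by `m • -`; Nakayama's lemma
kills it. A submodule of a direct sum all of whose projections vanish is zero. -/

theorem Submodule.smul_eq_self_of_smul_top_eq_top {R M : Type*} [CommSemiring R]
    [AddCommMonoid M] [Module R M] {I : Ideal R} {N : Submodule R M}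
    (h : I • (⊤ : Submodule R N) = ⊤) : I • N = N := by
  simpa only [Submodule.map_smul'', Submodule.map_top, Submodule.range_subtype] using
    congrArg (Submodule.map N.subtype) h

theorem IsLocalRing.eq_bot_of_maximalIdeal_smul_eq_self {A M : Type*} [CommRing A]
    [IsLocalRing A] [AddCommGroup M] [Module A M] [IsNoetherian A M] {N : Submodule A M}
    (h : IsLocalRing.maximalIdeal A • N = N) : N = ⊥ :=
  Submodule.eq_bot_of_le_smul_of_le_jacobson_bot _ N (IsNoetherian.noetherian N) h.ge
    (IsLocalRing.maximalIdeal_le_jacobson ⊥)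

theorem DirectSum.eq_bot_of_forall_map_component_eq_bot {R ι : Type*} [Semiring R]
    {X : ι → Type*} [∀ i, AddCommMonoid (X i)] [∀ i, Module R (X i)]
    {M : Submodule R (⨁ i, X i)} (hM : ∀ i, M.map (component R ι X i) = ⊥) : M = ⊥ := by
  refine (Submodule.eq_bot_iff M).mpr fun x hx => ext_component R fun i => ?_
  have hxi : component R ι X i x ∈ M.map (component R ι X i) := Submodule.mem_map_of_mem hx
  simpa [hM i] using hxi

/-- Let `A` be a Noetherian local ring with maximal ideal `m`, and let `M` be
an `A`-submodule of a direct sum of finitely generated `A`-modules.  If `M/mM = 0`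
(equivalently `m • M = M`), then `M = 0`. -/
theorem eq_bot_of_smul_eq_self_of_submodule_of_directSum
    (A : Type*) [CommRing A] [IsNoetherianRing A] [IsLocalRing A]
    (ι : Type*) (X : ι → Type*) [∀ i, AddCommGroup (X i)] [∀ i, Module A (X i)]
    [∀ i, Module.Finite A (X i)]
    (M : Submodule A (⨁ i, X i))
    (h : IsLocalRing.maximalIdeal A • (⊤ : Submodule A M) = ⊤) :
    M = ⊥ := by
  have hM := Submodule.smul_eq_self_of_smul_top_eq_top h
  refine eq_bot_of_forall_map_component_eq_bot fun i => ?_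
  have : IsNoetherian A (X i) := isNoetherian_of_isNoetherianRing_of_finite A (X i)
  exact IsLocalRing.eq_bot_of_maximalIdeal_smul_eq_self (by rw [← Submodule.map_smul'', hM])
end

section
/- Let O be a complete discrete valuation ring with uniformizer ϖ, and let M be an O-module such that M[ϖ^n] (the ϖ^n-torsion submodule) has finite length for every n ≥ 1. If M is not of bounded exponent (i.e. there is no n with ϖ^n M = 0 when restricted to the torsion, equivalently M ≠ M[ϖ^n] for all n), then the inverse limit of the system M[ϖ^{n}] with transition maps given by multiplication by ϖ (from M[ϖ^{n+1}] to M[ϖ^n]) is nonzero. -/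
/-!
The images of `M[ϖ^(n+k+1)]` in `M[ϖ^(n+1)]` under `ϖ^k` form a decreasing chain, which
stabilizes because `M[ϖ^(n+1)]` is Artinian (Mittag-Leffler). Along the stable images
multiplication by `ϖ` is surjective from level `n + 1` onto level `n`, and the stable image at
level `0` is nonzero because the torsion has unbounded exponent. Lifting a nonzero element of it
step by step gives a nonzero point of the inverse limit.
-/

theorem exists_seq_of_forall_exists_map_eq {α : Type*} {P : ℕ → α → Prop} {g : α → α}
    (h : ∀ n s, P n s → ∃ t, P (n + 1) t ∧ g t = s) {x : α} (hx : P 0 x) :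
    ∃ f : ℕ → α, f 0 = x ∧ (∀ n, P n (f n)) ∧ ∀ n, g (f (n + 1)) = f n := by
  choose lift lift_spec map_lift using h
  let F : ∀ n, {s // P n s} := fun n =>
    Nat.rec ⟨x, hx⟩ (fun n p => ⟨lift n p.1 p.2, lift_spec n p.1 p.2⟩) n
  exact ⟨fun n => (F n).1, rfl, fun n => (F n).2, fun n => map_lift n (F n).1 (F n).2⟩

theorem exists_pow_succ_smul_eq_zero_and_pow_smul_ne_zero {R M : Type*} [Monoid R]
    [AddMonoid M] [DistribMulAction R M] {a : R} {x : M} {m N : ℕ} (hm : a ^ m • x = 0)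
    (hN : a ^ N • x ≠ 0) : ∃ z : M, a ^ (N + 1) • z = 0 ∧ a ^ N • z ≠ 0 := by
  induction m generalizing x with
  | zero => simp_all
  | succ m ih =>
    by_cases hx : a ^ (N + 1) • x = 0
    · exact ⟨x, hx, hN⟩
    · rw [pow_succ, mul_smul] at hm hx
      exact ih hm hx

theorem IsDiscreteValuationRing.exists_pow_smul_eq_zero_of_mem_torsion {R M : Type*}
    [CommRing R] [IsDomain R] [IsDiscreteValuationRing R] [AddCommGroup M] [Module R M]
    {ϖ : R} (hϖ : Irreducible ϖ) {x : M} (hx : x ∈ Submodule.torsion R M) :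
    ∃ m, ϖ ^ m • x = 0 := by
  obtain ⟨r, hr⟩ := hx
  obtain ⟨m, u, hu⟩ := associated_pow_irreducible (nonZeroDivisors.coe_ne_zero r) hϖ
  refine ⟨m, ?_⟩
  rw [← hu, mul_comm, mul_smul]
  exact (congrArg _ hr).trans (smul_zero _)

namespace Submodule

variable {R M : Type*}

theorem exists_eq_iInf_of_antitone_of_le [Semiring R] [AddCommMonoid M] [Module R M]
    {N : Submodule R M} [IsArtinian R N] {f : ℕ → Submodule R M} (hf : Antitone f)
    (hle : ∀ k, f k ≤ N) : ∃ K, f K = ⨅ k, f k := by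
  obtain ⟨K, hK⟩ := IsArtinian.monotone_stabilizes
    ⟨fun k => OrderDual.toDual ((f k).comap N.subtype), fun _ _ h => comap_mono (hf h)⟩
  have stable : ∀ k, K ≤ k → f k = f K := fun k hk => by
    have h : (f k).comap N.subtype = (f K).comap N.subtype := (hK k hk).symm
    simpa only [map_comap_subtype, inf_eq_right.mpr (hle _)] using congrArg (map N.subtype) h
  refine ⟨K, le_antisymm (le_iInf fun k => ?_) (iInf_le f K)⟩
  rw [← stable (max k K) (le_max_right k K)]
  exact hf (le_max_left k K)

variable [CommRing R] [AddCommGroup M] [Module R M] (M) (a : R)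

def powTorsionImage (n k : ℕ) : Submodule R M :=
  (torsionBy R M (a ^ (n + k + 1))).map (LinearMap.lsmul R M (a ^ k))

def stablePowTorsionImage (n : ℕ) : Submodule R M :=
  ⨅ k, powTorsionImage M a n k

variable {M a}

theorem mem_powTorsionImage_iff {n k : ℕ} {y : M} :
    y ∈ powTorsionImage M a n k ↔ ∃ u : M, a ^ (n + k + 1) • u = 0 ∧ a ^ k • u = y := by
  simp only [powTorsionImage, mem_map, mem_torsionBy_iff, LinearMap.lsmul_apply]

theorem powTorsionImage_le_torsionBy (n k : ℕ) :
    powTorsionImage M a n k ≤ torsionBy R M (a ^ (n + 1)) := by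
  intro y hy
  obtain ⟨u, hu, rfl⟩ := mem_powTorsionImage_iff.mp hy
  rw [mem_torsionBy_iff, smul_smul, ← pow_add, show n + 1 + k = n + k + 1 by omega]
  exact hu

theorem powTorsionImage_antitone (n : ℕ) : Antitone (powTorsionImage M a n) := by
  refine antitone_nat_of_succ_le fun k y hy => ?_
  obtain ⟨u, hu, rfl⟩ := mem_powTorsionImage_iff.mp hy
  refine mem_powTorsionImage_iff.mpr ⟨a • u, ?_, ?_⟩
  · rwa [smul_smul, ← pow_succ, show n + k + 1 + 1 = n + (k + 1) + 1 by omega]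
  · rw [smul_smul, ← pow_succ]

theorem powTorsionImage_ne_bot {n k : ℕ} {z : M} (hz : a ^ (n + k + 1) • z = 0)
    (hz' : a ^ (n + k) • z ≠ 0) : powTorsionImage M a n k ≠ ⊥ := by
  refine (Submodule.ne_bot_iff _).mpr ⟨a ^ k • z, mem_powTorsionImage_iff.mpr ⟨z, hz, rfl⟩, ?_⟩
  intro h
  rw [pow_add, mul_smul, h, smul_zero] at hz'
  exact hz' rfl

theorem stablePowTorsionImage_le_torsionBy (n : ℕ) :
    stablePowTorsionImage M a n ≤ torsionBy R M (a ^ (n + 1)) :=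
  (iInf_le _ 0).trans (powTorsionImage_le_torsionBy n 0)

theorem exists_powTorsionImage_eq_stablePowTorsionImage (n : ℕ)
    [IsArtinian R (torsionBy R M (a ^ (n + 1)))] :
    ∃ K, powTorsionImage M a n K = stablePowTorsionImage M a n :=
  exists_eq_iInf_of_antitone_of_le (powTorsionImage_antitone n)
    (powTorsionImage_le_torsionBy n)

theorem exists_smul_eq_of_mem_stablePowTorsionImage {n : ℕ}
    [IsArtinian R (torsionBy R M (a ^ (n + 1 + 1)))] {s : M}
    (hs : s ∈ stablePowTorsionImage M a n) :
    ∃ t ∈ stablePowTorsionImage M a (n + 1), a • t = s := by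
  obtain ⟨K, hK⟩ := exists_powTorsionImage_eq_stablePowTorsionImage (M := M) (a := a) (n + 1)
  obtain ⟨v, hv, rfl⟩ := mem_powTorsionImage_iff.mp (mem_iInf _ |>.mp hs (K + 1))
  refine ⟨a ^ K • v, hK ▸ mem_powTorsionImage_iff.mpr ⟨v, ?_, rfl⟩, ?_⟩
  · rwa [show n + 1 + K + 1 = n + (K + 1) + 1 by omega]
  · rw [smul_smul, ← pow_succ']

theorem stablePowTorsionImage_ne_bot {n : ℕ} [IsArtinian R (torsionBy R M (a ^ (n + 1)))]
    (hunbdd : ∀ N : ℕ, ∃ x : M, (∃ m, a ^ m • x = 0) ∧ a ^ N • x ≠ 0) :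
    stablePowTorsionImage M a n ≠ ⊥ := by
  obtain ⟨K, hK⟩ := exists_powTorsionImage_eq_stablePowTorsionImage (M := M) (a := a) n
  obtain ⟨x, ⟨m, hm⟩, hx⟩ := hunbdd (n + K)
  obtain ⟨z, hz, hz'⟩ := exists_pow_succ_smul_eq_zero_and_pow_smul_ne_zero hm hx
  exact hK ▸ powTorsionImage_ne_bot hz hz'

end Submodule

theorem tate_limit_ne_zero_of_unbounded_exponent_general
    (R : Type*) [CommRing R] [IsDomain R] [IsDiscreteValuationRing R]
    (ϖ : R) (hϖ : Irreducible ϖ)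
    (M : Type*) [AddCommGroup M] [Module R M]
    (hlen : ∀ n : ℕ, IsFiniteLength R ↥(Submodule.torsionBy R M (ϖ ^ n)))
    (hunbdd : ∀ n : ℕ, ∃ x ∈ Submodule.torsion R M, ϖ ^ n • x ≠ 0) :
    ∃ f : ℕ → M, (∀ n, ϖ ^ (n + 1) • f n = 0) ∧ (∀ n, ϖ • f (n + 1) = f n) ∧
      ∃ n, f n ≠ 0 := by
  have artinian (n : ℕ) : IsArtinian R (Submodule.torsionBy R M (ϖ ^ n)) :=
    (isFiniteLength_iff_isNoetherian_isArtinian.mp (hlen n)).2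
  have unbounded (N : ℕ) : ∃ x : M, (∃ m, ϖ ^ m • x = 0) ∧ ϖ ^ N • x ≠ 0 := by
    obtain ⟨x, hx, hx'⟩ := hunbdd N
    exact ⟨x, IsDiscreteValuationRing.exists_pow_smul_eq_zero_of_mem_torsion hϖ hx, hx'⟩
  obtain ⟨x, hx, hx0⟩ :=
    (Submodule.ne_bot_iff _).mp (Submodule.stablePowTorsionImage_ne_bot (n := 0) unbounded)
  obtain ⟨f, rfl, hf_mem, hf⟩ := exists_seq_of_forall_exists_map_eq
    (P := fun n s => s ∈ Submodule.stablePowTorsionImage M ϖ n) (g := (ϖ • ·))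
    (fun _ _ hs => Submodule.exists_smul_eq_of_mem_stablePowTorsionImage hs) hx
  exact ⟨f, fun n => Submodule.stablePowTorsionImage_le_torsionBy n (hf_mem n), hf, 0, hx0⟩

/-- Let `R` be a complete discrete valuation ring with uniformizer `ϖ`, and
let `M` be an `R`-module such that `M[ϖ^n]` has finite length for every `n`.  If the torsion
of `M` is not of bounded exponent (for every `n` there is a torsion element not killed by
`ϖ^n`), then the inverse limit of the system `M[ϖ^n]` with transition maps given by
multiplication by `ϖ` is nonzero: there is a compatible family `(f n)ₙ` with
`f n ∈ M[ϖ^{n+1}]`, `ϖ • f (n+1) = f n`, not all of whose members are zero. -/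
theorem tate_limit_ne_zero_of_unbounded_exponent
    (R : Type*) [CommRing R] [IsDomain R] [IsDiscreteValuationRing R]
    [IsAdicComplete (IsLocalRing.maximalIdeal R) R]
    (ϖ : R) (hϖ : Irreducible ϖ)
    (M : Type*) [AddCommGroup M] [Module R M]
    (hlen : ∀ n : ℕ, IsFiniteLength R ↥(Submodule.torsionBy R M (ϖ ^ n)))
    (hunbdd : ∀ n : ℕ, ∃ x ∈ Submodule.torsion R M, ϖ ^ n • x ≠ 0) :
    ∃ f : ℕ → M, (∀ n, ϖ ^ (n + 1) • f n = 0) ∧ (∀ n, ϖ • f (n + 1) = f n) ∧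
      ∃ n, f n ≠ 0 :=
  tate_limit_ne_zero_of_unbounded_exponent_general R ϖ hϖ M hlen hunbdd
end

section
/- Let O be a complete discrete valuation ring with uniformizer ϖ, and let M be a torsion O-module such that M[ϖ^n] has finite length for all n. If M is not of bounded exponent, then M contains a nonzero divisible O-submodule. Moreover, the maximal divisible submodule of M is nonzero. -/
/-!
The submodules `ϖ ^ n • M` decrease, so their traces on the Artinian module `M[ϖ]` stabilise
from some `N` on. Then `D = ⨅ n, ϖ ^ n • M` is divisible: for `x ∈ D` and `n ≥ N`, solutions of
`ϖ • y = x` in `ϖ ^ N • M` and in `ϖ ^ n • M` differ by an element of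
`M[ϖ] ⊓ ϖ ^ N • M ≤ ϖ ^ n • M`. And `D ≠ 0`, since an element `x` with `ϖ ^ N • x ≠ 0` yields
a nonzero element of `M[ϖ] ⊓ ϖ ^ N • M`.
-/

open Pointwise Submodule

theorem exists_pow_smul_ne_zero_and_smul_eq_zero {R M : Type*} [Monoid R] [AddMonoid M]
    [DistribMulAction R M] {r : R} {x : M} (hx : x ≠ 0) (htor : ∃ n : ℕ, r ^ n • x = 0) :
    ∃ j : ℕ, r ^ j • x ≠ 0 ∧ r • r ^ j • x = 0 := by
  classical
  have hpos : Nat.find htor ≠ 0 := fun h ↦ hx (by simpa [h] using Nat.find_spec htor)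
  refine ⟨Nat.find htor - 1, Nat.find_min htor (by omega), ?_⟩
  rw [smul_smul, ← pow_succ', Nat.sub_add_cancel (Nat.one_le_iff_ne_zero.mpr hpos)]
  exact Nat.find_spec htor

namespace Submodule

variable {R M : Type*} [CommRing R] [AddCommGroup M] [Module R M] (r : R)

theorem mem_pow_smul_top_iff {n : ℕ} {x : M} :
    x ∈ r ^ n • (⊤ : Submodule R M) ↔ ∃ z : M, r ^ n • z = x := by
  simp [mem_smul_pointwise_iff_exists]

theorem pow_smul_top_antitone : Antitone fun n : ℕ ↦ r ^ n • (⊤ : Submodule R M) := by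
  intro m n hmn x hx
  obtain ⟨z, rfl⟩ := (mem_pow_smul_top_iff r).mp hx
  exact (mem_pow_smul_top_iff r).mpr ⟨r ^ (n - m) • z, by rw [smul_smul, ← pow_add,
    Nat.add_sub_cancel' hmn]⟩

theorem exists_torsionBy_inf_pow_smul_top_le_iInf [IsArtinian R (torsionBy R M r)] :
    ∃ N, torsionBy R M r ⊓ r ^ N • ⊤ ≤ ⨅ n, r ^ n • (⊤ : Submodule R M) := by
  obtain ⟨N, hN⟩ := IsArtinian.monotone_stabilizes
    ⟨fun n ↦ OrderDual.toDual ((r ^ n • ⊤ : Submodule R M).comap (torsionBy R M r).subtype),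
      fun _ _ h ↦ comap_mono (pow_smul_top_antitone r h)⟩
  refine ⟨N, le_iInf fun n ↦ ?_⟩
  rcases le_total n N with h | h
  · exact inf_le_right.trans (pow_smul_top_antitone r h)
  · rintro x ⟨hxT, hxN⟩
    have : (⟨x, hxT⟩ : torsionBy R M r) ∈
        (r ^ N • ⊤ : Submodule R M).comap (torsionBy R M r).subtype := hxN
    rwa [OrderDual.toDual_inj.mp (hN n h)] at this

variable {r} {N : ℕ}

theorem exists_smul_eq_of_mem_iInf_pow_smul_top
    (hN : torsionBy R M r ⊓ r ^ N • ⊤ ≤ ⨅ n, r ^ n • (⊤ : Submodule R M)) {x : M}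
    (hx : x ∈ ⨅ n, r ^ n • (⊤ : Submodule R M)) :
    ∃ y ∈ ⨅ n, r ^ n • (⊤ : Submodule R M), r • y = x := by
  have hroot : ∀ n, ∃ z : M, r • r ^ n • z = x := fun n ↦ by
    simpa [smul_smul, ← pow_succ'] using
      (mem_pow_smul_top_iff r).mp (mem_iInf _ |>.mp hx (n + 1))
  obtain ⟨z, hz⟩ := hroot N
  refine ⟨r ^ N • z, mem_iInf _ |>.mpr fun n ↦ ?_, hz⟩
  rcases le_total n N with h | h
  · exact pow_smul_top_antitone r h ((mem_pow_smul_top_iff r).mpr ⟨z, rfl⟩)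
  · obtain ⟨z', hz'⟩ := hroot n
    have hz'n : r ^ n • z' ∈ r ^ n • (⊤ : Submodule R M) := (mem_pow_smul_top_iff r).mpr ⟨z', rfl⟩
    have hdiff : r ^ N • z - r ^ n • z' ∈ torsionBy R M r ⊓ r ^ N • ⊤ :=
      ⟨by simp [smul_sub, hz, hz'],
        sub_mem ((mem_pow_smul_top_iff r).mpr ⟨z, rfl⟩) (pow_smul_top_antitone r h hz'n)⟩
    simpa using add_mem (mem_iInf _ |>.mp (hN hdiff) n) hz'n

theorem torsionBy_inf_pow_smul_top_ne_bot {x : M} (htor : ∃ m : ℕ, r ^ m • x = 0)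
    (hx : r ^ N • x ≠ 0) : torsionBy R M r ⊓ r ^ N • (⊤ : Submodule R M) ≠ ⊥ := by
  obtain ⟨m, hm⟩ := htor
  obtain ⟨j, hj, hjr⟩ := exists_pow_smul_ne_zero_and_smul_eq_zero hx
    ⟨m, by rw [smul_comm (r ^ m), hm, smul_zero]⟩
  exact (Submodule.ne_bot_iff _).mpr ⟨_, ⟨hjr, (mem_pow_smul_top_iff r).mpr
    ⟨r ^ j • x, smul_comm (r ^ N) (r ^ j) x⟩⟩, hj⟩

end Submodule

theorem exists_divisible_submodule_of_unbounded_exponent_general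
    (R : Type*) [CommRing R]
    (ϖ : R)
    (M : Type*) [AddCommGroup M] [Module R M]
    (htor : ∀ x : M, ∃ n : ℕ, ϖ ^ n • x = 0)
    (hlen : ∀ n : ℕ, IsFiniteLength R ↥(Submodule.torsionBy R M (ϖ ^ n)))
    (hunbdd : ∀ n : ℕ, ∃ x : M, ϖ ^ n • x ≠ 0) :
    (∃ D : Submodule R M, D ≠ ⊥ ∧ ∀ x ∈ D, ∃ y ∈ D, ϖ • y = x)
    ∧ sSup {D : Submodule R M | ∀ x ∈ D, ∃ y ∈ D, ϖ • y = x} ≠ ⊥ := by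
  have : IsArtinian R (torsionBy R M ϖ) :=
    (isFiniteLength_iff_isNoetherian_isArtinian.mp (pow_one ϖ ▸ hlen 1)).2
  obtain ⟨N, hN⟩ := exists_torsionBy_inf_pow_smul_top_le_iInf (M := M) ϖ
  obtain ⟨x, hx⟩ := hunbdd N
  have hD : ⨅ n, ϖ ^ n • (⊤ : Submodule R M) ≠ ⊥ :=
    ne_bot_of_le_ne_bot (torsionBy_inf_pow_smul_top_ne_bot (htor x) hx) hN
  have hdiv : ∀ y ∈ ⨅ n, ϖ ^ n • (⊤ : Submodule R M), ∃ z ∈ ⨅ n, ϖ ^ n • (⊤ : Submodule R M),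
      ϖ • z = y := fun _ ↦ exists_smul_eq_of_mem_iInf_pow_smul_top hN
  exact ⟨⟨_, hD, hdiv⟩, ne_bot_of_le_ne_bot hD (le_sSup hdiv)⟩

/-- Let `R` be a complete discrete valuation ring with uniformizer `ϖ`, and
let `M` be a torsion `R`-module such that `M[ϖ^n]` has finite length for all `n`.  If `M` is
not of bounded exponent, then `M` contains a nonzero divisible `R`-submodule; moreover the
maximal divisible submodule (the sup of all divisible submodules) of `M` is nonzero. -/
theorem exists_divisible_submodule_of_unbounded_exponent
    (R : Type*) [CommRing R] [IsDomain R] [IsDiscreteValuationRing R]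
    [IsAdicComplete (IsLocalRing.maximalIdeal R) R]
    (ϖ : R) (hϖ : Irreducible ϖ)
    (M : Type*) [AddCommGroup M] [Module R M]
    (htor : ∀ x : M, ∃ n : ℕ, ϖ ^ n • x = 0)
    (hlen : ∀ n : ℕ, IsFiniteLength R ↥(Submodule.torsionBy R M (ϖ ^ n)))
    (hunbdd : ∀ n : ℕ, ∃ x : M, ϖ ^ n • x ≠ 0) :
    (∃ D : Submodule R M, D ≠ ⊥ ∧ ∀ x ∈ D, ∃ y ∈ D, ϖ • y = x)
    ∧ sSup {D : Submodule R M | ∀ x ∈ D, ∃ y ∈ D, ϖ • y = x} ≠ ⊥ :=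
  exists_divisible_submodule_of_unbounded_exponent_general R ϖ M htor hlen hunbdd
end

section
/- Let K'/K be a finite Galois extension of fields. Let V and W be K-vector spaces equipped with a linear action of a group G, and suppose every nonzero G-equivariant K'-linear endomorphism space Hom_{K'[G]}(V ⊗_K K', W ⊗_K K') is one-dimensional over K'. Then for any nonzero G-equivariant K'-linear map f : V ⊗_K K' → W ⊗_K K', there exists a scalar c ∈ (K')^× such that cf is invariant under the natural semilinear Galois action and hence descends to a G-equivariant K-linear map V → W. -/
/-!
Twisting by `σ ∈ Gal(K'/K)` acts semilinearly on equivariant maps and preserves equivariance, so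
one-dimensionality gives `f^σ = c_σ f`; comparing `f^{στ}` with `(f^τ)^σ` shows that `c` is a
multiplicative 1-cocycle. By Hilbert 90, `c_σ = σ(β)/β`, and then `β⁻¹ f` is Galois invariant.
A Galois-invariant map sends `1 ⊗ v` to a Galois-invariant vector of `K' ⊗ W`, whose coordinates
in a basis coming from `W` are fixed by the Galois group and hence lie in `K`; so it is the base
change of a `K`-linear map, which is equivariant because base change is injective on maps.
-/

open TensorProduct LinearMap

namespace LinearMap

theorem baseChange_injective {R A M N : Type*} [CommRing R] [CommRing A] [Algebra R A]
    [Module.FaithfullyFlat R A] [AddCommGroup M] [Module R M] [AddCommGroup N] [Module R N] :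
    Function.Injective (baseChange A : (M →ₗ[R] N) → A ⊗[R] M →ₗ[A] A ⊗[R] N) := by
  intro g₁ g₂ h
  ext m
  apply Module.FaithfullyFlat.tensorProduct_mk_injective (A := R) (B := A) N
  simpa using congr($h (1 ⊗ₜ m))

end LinearMap

section GaloisTwist

variable {K K' : Type*} [Field K] [Field K'] [Algebra K K']
variable {U M N : Type*} [AddCommGroup U] [Module K U] [AddCommGroup M] [Module K M]
  [AddCommGroup N] [Module K N]

theorem AlgEquiv.rTensor_smul (σ : K' ≃ₐ[K] K') (a : K') (x : K' ⊗[K] M) :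
    rTensor M σ.toLinearMap (a • x) = σ a • rTensor M σ.toLinearMap x := by
  induction x using TensorProduct.induction_on with
  | zero => simp
  | tmul b m => simp [smul_tmul']
  | add x y hx hy => simp [hx, hy]

theorem AlgEquiv.rTensor_baseChange (σ : K' ≃ₐ[K] K') (φ : M →ₗ[K] N) (x : K' ⊗[K] M) :
    rTensor N σ.toLinearMap (φ.baseChange K' x) = φ.baseChange K' (rTensor M σ.toLinearMap x) := by
  induction x using TensorProduct.induction_on with
  | zero => simp
  | tmul b m => simp
  | add x y hx hy => simp [hx, hy]

theorem AlgEquiv.rTensor_mul (σ τ : K' ≃ₐ[K] K') (x : K' ⊗[K] M) :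
    rTensor M (σ * τ).toLinearMap x = rTensor M σ.toLinearMap (rTensor M τ.toLinearMap x) := by
  rw [← rTensor_comp_apply]
  rfl

theorem AlgEquiv.rTensor_one (x : K' ⊗[K] M) :
    rTensor M (1 : K' ≃ₐ[K] K').toLinearMap x = x := by
  rw [show (1 : K' ≃ₐ[K] K').toLinearMap = LinearMap.id from rfl, rTensor_id, id_apply]

namespace LinearMap

/-- The map `f^σ = σ ∘ f ∘ σ⁻¹`, with `σ` acting on the first tensor factor. -/
noncomputable def galoisConj (σ : K' ≃ₐ[K] K') (f : K' ⊗[K] M →ₗ[K'] K' ⊗[K] N) :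
    K' ⊗[K] M →ₗ[K'] K' ⊗[K] N where
  toFun x := rTensor N σ.toLinearMap (f (rTensor M σ⁻¹.toLinearMap x))
  map_add' x y := by simp
  map_smul' a x := by
    rw [σ⁻¹.rTensor_smul, map_smul, σ.rTensor_smul, RingHom.id_apply, AlgEquiv.aut_inv,
      AlgEquiv.apply_symm_apply]

theorem galoisConj_apply (σ : K' ≃ₐ[K] K') (f : K' ⊗[K] M →ₗ[K'] K' ⊗[K] N) (x : K' ⊗[K] M) :
    galoisConj σ f x = rTensor N σ.toLinearMap (f (rTensor M σ⁻¹.toLinearMap x)) := rfl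

theorem galoisConj_apply_rTensor (σ : K' ≃ₐ[K] K') (f : K' ⊗[K] M →ₗ[K'] K' ⊗[K] N)
    (x : K' ⊗[K] M) :
    galoisConj σ f (rTensor M σ.toLinearMap x) = rTensor N σ.toLinearMap (f x) := by
  rw [galoisConj_apply, ← AlgEquiv.rTensor_mul, inv_mul_cancel, AlgEquiv.rTensor_one]

theorem galoisConj_one (f : K' ⊗[K] M →ₗ[K'] K' ⊗[K] N) : galoisConj 1 f = f :=
  LinearMap.ext fun x => by
    rw [galoisConj_apply, inv_one, AlgEquiv.rTensor_one, AlgEquiv.rTensor_one]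

theorem galoisConj_mul (σ τ : K' ≃ₐ[K] K') (f : K' ⊗[K] M →ₗ[K'] K' ⊗[K] N) :
    galoisConj (σ * τ) f = galoisConj σ (galoisConj τ f) := by
  refine LinearMap.ext fun x => ?_
  simp only [galoisConj_apply, mul_inv_rev, AlgEquiv.rTensor_mul]

theorem galoisConj_smul (σ : K' ≃ₐ[K] K') (a : K') (f : K' ⊗[K] M →ₗ[K'] K' ⊗[K] N) :
    galoisConj σ (a • f) = σ a • galoisConj σ f := by
  refine LinearMap.ext fun x => ?_
  simp only [galoisConj_apply, smul_apply, σ.rTensor_smul]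

theorem eq_zero_of_galoisConj_eq_zero {σ : K' ≃ₐ[K] K'} {f : K' ⊗[K] M →ₗ[K'] K' ⊗[K] N}
    (h : galoisConj σ f = 0) : f = 0 := by
  rw [← galoisConj_one f, ← inv_mul_cancel σ, galoisConj_mul, h]
  exact LinearMap.ext fun x => by simp [galoisConj_apply]

theorem galoisConj_comp_baseChange (σ : K' ≃ₐ[K] K') (f : K' ⊗[K] M →ₗ[K'] K' ⊗[K] N)
    (φ : U →ₗ[K] M) : galoisConj σ (f ∘ₗ φ.baseChange K') = galoisConj σ f ∘ₗ φ.baseChange K' := by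
  refine LinearMap.ext fun x => ?_
  simp only [galoisConj_apply, comp_apply, AlgEquiv.rTensor_baseChange]

theorem galoisConj_baseChange_comp (σ : K' ≃ₐ[K] K') (f : K' ⊗[K] U →ₗ[K'] K' ⊗[K] M)
    (φ : M →ₗ[K] N) : galoisConj σ (φ.baseChange K' ∘ₗ f) = φ.baseChange K' ∘ₗ galoisConj σ f := by
  refine LinearMap.ext fun x => ?_
  simp only [galoisConj_apply, comp_apply, AlgEquiv.rTensor_baseChange]

theorem rTensor_comp_eq_of_galoisConj_eq {σ : K' ≃ₐ[K] K'} {f : K' ⊗[K] M →ₗ[K'] K' ⊗[K] N}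
    (h : galoisConj σ f = f) :
    rTensor N σ.toLinearMap ∘ₗ f.restrictScalars K =
      f.restrictScalars K ∘ₗ rTensor M σ.toLinearMap := by
  refine LinearMap.ext fun x => ?_
  simp [← galoisConj_apply_rTensor, h]

end LinearMap

end GaloisTwist

section Descent

variable {K K' : Type*} [Field K] [Field K'] [Algebra K K']
variable {M N : Type*} [AddCommGroup M] [Module K M] [AddCommGroup N] [Module K N]

/-- Hilbert 90, for a cocycle with values in `K'` rather than `K'ˣ`. -/
theorem exists_units_eq_mul_of_isMulCocycle [FiniteDimensional K K'] (c : (K' ≃ₐ[K] K') → K')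
    (hc₀ : ∀ σ, c σ ≠ 0) (hc : ∀ σ τ, c (σ * τ) = σ (c τ) * c σ) :
    ∃ β : K'ˣ, ∀ σ : K' ≃ₐ[K] K', σ β = c σ * β := by
  obtain ⟨β, hβ⟩ := groupCohomology.isMulCoboundary₁_of_isMulCocycle₁_of_aut_to_units
    (fun σ => Units.mk0 (c σ) (hc₀ σ)) fun σ τ => Units.ext (hc σ τ)
  refine ⟨β, fun σ => ?_⟩
  have hβσ : σ • β / β = Units.mk0 (c σ) (hc₀ σ) := hβ σ
  rw [← Units.val_mk0 (hc₀ σ), ← hβσ]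
  simp [AlgEquiv.smul_units_def]

theorem LinearMap.exists_galoisConj_units_smul_eq [FiniteDimensional K K']
    {f : K' ⊗[K] M →ₗ[K'] K' ⊗[K] N} (hf₀ : f ≠ 0)
    (hf : ∀ σ : K' ≃ₐ[K] K', ∃ a : K', galoisConj σ f = a • f) :
    ∃ c : K'ˣ, ∀ σ : K' ≃ₐ[K] K', galoisConj σ ((c : K') • f) = (c : K') • f := by
  choose a ha using hf
  have ha₀ (σ) : a σ ≠ 0 := by
    rintro h
    exact hf₀ (eq_zero_of_galoisConj_eq_zero (by rw [ha, h, zero_smul]))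
  have hcocycle (σ τ) : a (σ * τ) = σ (a τ) * a σ := by
    refine smul_left_injective (M := K' ⊗[K] M →ₗ[K'] K' ⊗[K] N) K' hf₀ ?_
    change a (σ * τ) • f = (σ (a τ) * a σ) • f
    rw [← ha, galoisConj_mul, ha, galoisConj_smul, ha, smul_smul]
  obtain ⟨β, hβ⟩ := exists_units_eq_mul_of_isMulCocycle a ha₀ hcocycle
  refine ⟨β⁻¹, fun σ => ?_⟩
  rw [galoisConj_smul, ha, smul_smul, Units.val_inv_eq_inv_val, map_inv₀, hβ,
    mul_inv, mul_right_comm, inv_mul_cancel₀ (ha₀ σ), one_mul]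

theorem AlgEquiv.basis_repr_rTensor {ι : Type*} (b : Module.Basis ι K N) (σ : K' ≃ₐ[K] K')
    (x : K' ⊗[K] N) (i : ι) :
    (Algebra.TensorProduct.basis K' b).repr (rTensor N σ.toLinearMap x) i
      = σ ((Algebra.TensorProduct.basis K' b).repr x i) := by
  induction x using TensorProduct.induction_on with
  | zero => simp
  | tmul a n => simp
  | add x y hx hy => simp [hx, hy]

theorem mem_range_mk_one_of_forall_rTensor_eq [IsGalois K K'] [FiniteDimensional K K']
    {x : K' ⊗[K] N} (hx : ∀ σ : K' ≃ₐ[K] K', rTensor N σ.toLinearMap x = x) :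
    x ∈ range (TensorProduct.mk K K' N 1) := by
  set b := Module.Basis.ofVectorSpace K N
  set B := Algebra.TensorProduct.basis K' b
  rw [← B.linearCombination_repr x, Finsupp.linearCombination_apply]
  refine Submodule.finsuppSum_mem _ _ _ _ fun i _ => ?_
  obtain ⟨k, hk⟩ := (IsGalois.mem_range_algebraMap_iff_fixed (B.repr x i)).2 fun σ => by
    rw [← σ.basis_repr_rTensor, hx]
  exact ⟨k • b i, by simp [B, ← hk, algebraMap_smul]⟩

theorem LinearMap.exists_eq_baseChange [IsGalois K K'] [FiniteDimensional K K']
    {F : K' ⊗[K] M →ₗ[K'] K' ⊗[K] N}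
    (hF : ∀ σ : K' ≃ₐ[K] K', rTensor N σ.toLinearMap ∘ₗ F.restrictScalars K =
      F.restrictScalars K ∘ₗ rTensor M σ.toLinearMap) :
    ∃ g : M →ₗ[K] N, F = g.baseChange K' := by
  set j := TensorProduct.mk K K' N 1
  have hj : Function.Injective j := Module.FaithfullyFlat.tensorProduct_mk_injective N
  set F₁ := F.restrictScalars K ∘ₗ TensorProduct.mk K K' M 1
  have hF₁ (m : M) : F₁ m ∈ range j := mem_range_mk_one_of_forall_rTensor_eq fun σ => by
    simpa [F₁] using congr($(hF σ) (1 ⊗ₜ m))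
  refine ⟨(LinearEquiv.ofInjective j hj).symm.toLinearMap ∘ₗ codRestrict (range j) F₁ hF₁, ?_⟩
  ext m
  exact (LinearEquiv.ofInjective_symm_apply (h := hj) j ⟨F₁ m, hF₁ m⟩).symm

end Descent

/-- Let `K'/K` be a finite Galois extension.  Let `V`, `W` be `K`-vector
spaces with representations of a group `G`, and suppose the space of `G`-equivariant
`K'`-linear maps `V ⊗_K K' → W ⊗_K K'` is (at most) one-dimensional: any two equivariant
maps are proportional over `K'` (once one of them is nonzero).  Then for any nonzero
`G`-equivariant `K'`-linear map `f : V ⊗_K K' → W ⊗_K K'` there is a scalar `c ∈ (K')ˣ`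
such that `c • f` is invariant under the natural semilinear Galois action
(`σ ∘ (c • f) = (c • f) ∘ σ` for every `σ ∈ Gal(K'/K)`, acting through the first tensor
factor) and hence descends to a `G`-equivariant `K`-linear map `V → W` (i.e. `c • f` is
the base change of such a map). -/
theorem galois_descent_of_equivariant_map
    (K K' : Type*) [Field K] [Field K'] [Algebra K K']
    [IsGalois K K'] [FiniteDimensional K K']
    (G : Type*) [Group G]
    (V W : Type*) [AddCommGroup V] [Module K V] [AddCommGroup W] [Module K W]
    (ρV : Representation K G V) (ρW : Representation K G W)
    (hone : ∀ f₁ f₂ : K' ⊗[K] V →ₗ[K'] K' ⊗[K] W,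
      (∀ g : G, f₁ ∘ₗ LinearMap.baseChange K' (ρV g) = LinearMap.baseChange K' (ρW g) ∘ₗ f₁) →
      (∀ g : G, f₂ ∘ₗ LinearMap.baseChange K' (ρV g) = LinearMap.baseChange K' (ρW g) ∘ₗ f₂) →
      f₁ ≠ 0 → ∃ a : K', f₂ = a • f₁)
    (f : K' ⊗[K] V →ₗ[K'] K' ⊗[K] W)
    (hf : ∀ g : G, f ∘ₗ LinearMap.baseChange K' (ρV g) = LinearMap.baseChange K' (ρW g) ∘ₗ f)
    (hf0 : f ≠ 0) :
    ∃ c : K'ˣ,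
      (∀ σ : K' ≃ₐ[K] K',
        LinearMap.rTensor W σ.toLinearMap ∘ₗ (((c : K') • f).restrictScalars K)
          = (((c : K') • f).restrictScalars K) ∘ₗ LinearMap.rTensor V σ.toLinearMap)
      ∧ ∃ g : V →ₗ[K] W, (∀ γ : G, g ∘ₗ ρV γ = ρW γ ∘ₗ g) ∧
          (c : K') • f = LinearMap.baseChange K' g := by
  have hconj (σ : K' ≃ₐ[K] K') (γ : G) :
      galoisConj σ f ∘ₗ (ρV γ).baseChange K' = (ρW γ).baseChange K' ∘ₗ galoisConj σ f := by
    rw [← galoisConj_comp_baseChange, hf, galoisConj_baseChange_comp]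
  obtain ⟨c, hc⟩ := exists_galoisConj_units_smul_eq hf0 fun σ => hone f _ hf (hconj σ) hf0
  have hcomm (σ : K' ≃ₐ[K] K') := rTensor_comp_eq_of_galoisConj_eq (hc σ)
  obtain ⟨g, hg⟩ := exists_eq_baseChange hcomm
  refine ⟨c, hcomm, g, fun γ => baseChange_injective (A := K') ?_, hg⟩
  rw [baseChange_comp, baseChange_comp, ← hg, smul_comp, hf, comp_smul]
end

section
/- Let Γ be a finite group acting on a field K' with fixed field K, and let (c_σ)_{σ∈Γ} be a family of elements of (K')^× satisfying the cocycle condition c_{στ} = c_σ · σ(c_τ). Then there exists c ∈ (K')^× such that c_σ = c / σ(c) for all σ ∈ Γ. -/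
open groupCohomology

theorem isMulCoboundary₁_iff_exists_eq_div_smul {G M : Type*} [Monoid G] [CommGroup M]
    [MulDistribMulAction G M] (f : G → M) :
    IsMulCoboundary₁ f ↔ ∃ x : M, ∀ g : G, f g = x / g • x := by
  constructor
  · rintro ⟨x, hx⟩
    exact ⟨x⁻¹, fun g => by rw [← hx g, smul_inv', inv_div_inv]⟩
  · rintro ⟨x, hx⟩
    exact ⟨x⁻¹, fun g => by rw [hx g, smul_inv', inv_div_inv]⟩

theorem AlgEquiv.isMulCocycle₁_of_coe_mul_eq_mul_apply {K L : Type*} [CommSemiring K]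
    [CommSemiring L] [Algebra K L] (c : (L ≃ₐ[K] L) → Lˣ)
    (hc : ∀ σ τ : L ≃ₐ[K] L, (c (σ * τ) : L) = (c σ : L) * σ ((c τ : L))) :
    IsMulCocycle₁ c := fun σ τ =>
  Units.ext <| by rw [hc, Units.val_mul, AlgEquiv.smul_units_def, Units.coe_map, mul_comm]; rfl

theorem hilbert90_cocycle_is_coboundary_general
    (K K' : Type*) [Field K] [Field K'] [Algebra K K']
    [FiniteDimensional K K']
    (c : (K' ≃ₐ[K] K') → K'ˣ)
    (hc : ∀ σ τ : K' ≃ₐ[K] K', (c (σ * τ) : K') = (c σ : K') * σ ((c τ : K'))) :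
    ∃ β : K'ˣ, ∀ σ : K' ≃ₐ[K] K', (c σ : K') = (β : K') / σ ((β : K')) := by
  obtain ⟨β, hβ⟩ := (isMulCoboundary₁_iff_exists_eq_div_smul c).1 <|
    isMulCoboundary₁_of_isMulCocycle₁_of_aut_to_units c
      (AlgEquiv.isMulCocycle₁_of_coe_mul_eq_mul_apply c hc)
  refine ⟨β, fun σ => ?_⟩
  rw [hβ σ, Units.val_div_eq_div_val, AlgEquiv.smul_units_def, Units.coe_map]
  rfl

/-- **Hilbert's Theorem 90.** Let `K'/K` be a finite Galois extension, with
Galois group `Γ = Gal(K'/K)` (a finite group acting on the field `K'` with fixed field `K`).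
If `(c_σ)_{σ ∈ Γ}` is a family of elements of `(K')ˣ` satisfying the cocycle condition
`c_{στ} = c_σ · σ(c_τ)`, then there exists `c ∈ (K')ˣ` with `c_σ = c / σ(c)` for all `σ`. -/
theorem hilbert90_cocycle_is_coboundary
    (K K' : Type*) [Field K] [Field K'] [Algebra K K']
    [IsGalois K K'] [FiniteDimensional K K']
    (c : (K' ≃ₐ[K] K') → K'ˣ)
    (hc : ∀ σ τ : K' ≃ₐ[K] K', (c (σ * τ) : K') = (c σ : K') * σ ((c τ : K'))) :
    ∃ β : K'ˣ, ∀ σ : K' ≃ₐ[K] K', (c σ : K') = (β : K') / σ ((β : K')) :=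
  hilbert90_cocycle_is_coboundary_general K K' c hc
end

section
/- Let O be a complete discrete valuation ring with uniformizer ϖ and fraction field K, let V be a K-vector space with an action of a group H, and let V° and V◇ be two H-invariant O-lattices in V (O-submodules spanning V over K) with V° ⊆ V◇, such that V°/ϖV° has finite length as an O/ϖ[H]-module and both lattices are ϖ-adically separated. If the quotient V◇/V° is of bounded exponent as an O-module, say ϖ^n(V◇/V°) = 0, then ϖ^n V◇ ⊆ V° ⊆ V◇, the quotients V°/ϖV° and V◇/ϖV◇ have the same finite length, and their semisimplifications as O/ϖ[H]-modules are isomorphic. -/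
/-- A submodule invariant under the action of `H`. -/
def SubInvariant (H : Type*) [Monoid H] {R V : Type*} [CommRing R] [AddCommGroup V]
    [Module R V] [DistribMulAction H V] (W : Submodule R V) : Prop :=
  ∀ (h : H), ∀ x ∈ W, h • x ∈ W

/-- A composition chain `Wbot = C 0 < C 1 < ⋯ < C N = Wtop` of `H`-invariant
`R`-submodules, each step of which is simple (admits no `H`-invariant submodule strictly
in between). -/
def IsInvariantCompChain (H : Type*) [Monoid H] {R V : Type*} [CommRing R] [AddCommGroup V]
    [Module R V] [DistribMulAction H V]
    (Wbot Wtop : Submodule R V) (N : ℕ) (C : ℕ → Submodule R V) : Prop :=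
  C 0 = Wbot ∧ C N = Wtop ∧ (∀ i ≤ N, SubInvariant H (C i)) ∧
    ∀ i < N, C i < C (i + 1) ∧
      ∀ T : Submodule R V, SubInvariant H T → C i ≤ T → T ≤ C (i + 1) →
        T = C i ∨ T = C (i + 1)

/-- An `H`-equivariant `R`-linear isomorphism between the subquotients `W₁'/W₁` and
`W₂'/W₂` (equivariance is expressed via compatible lifts, the `H`-action descending to the
subquotients by the invariance hypotheses). -/
def FactorHIso (H : Type*) [Monoid H] {R V : Type*} [CommRing R] [AddCommGroup V]
    [Module R V] [DistribMulAction H V]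
    (W₁ W₁' W₂ W₂' : Submodule R V)
    (h₁ : ∀ (h : H), ∀ x ∈ W₁', h • x ∈ W₁')
    (h₂ : ∀ (h : H), ∀ x ∈ W₂', h • x ∈ W₂') : Prop :=
  ∃ f : (↥W₁' ⧸ (W₁.comap W₁'.subtype)) ≃ₗ[R] (↥W₂' ⧸ (W₂.comap W₂'.subtype)),
    ∀ (h : H) (x : ↥W₁') (y : ↥W₂'),
      f (Submodule.Quotient.mk x) = Submodule.Quotient.mk y →
      f (Submodule.Quotient.mk ⟨h • (x : V), h₁ h (x : V) x.2⟩)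
        = Submodule.Quotient.mk ⟨h • (y : V), h₂ h (y : V) y.2⟩

/-!
The invariant `R`-submodules of `V` are the `R[H]`-submodules of `V`, so the claim is about
composition series of `R[H]`-modules, where Jordan–Hölder applies. Multiplication `μ` by `ϖ` is
injective (`V` is a `K`-vector space) and preserves every submodule. If `U ≤ W` and `ϖ W ≤ U`,
then in the chain `ϖ U ≤ ϖ W ≤ U ≤ W` the factors of `U / ϖ U` are those of `[ϖ U, ϖ W]`
and of `[ϖ W, U]`, the factors of `W / ϖ W` are those of `[ϖ W, U]` and of `[U, W]`, and `μ`
identifies `[U, W]` with `[ϖ U, ϖ W]`. The lattices `ϖ⁻ᵏ V₀ ∩ V₁`, `k = 0, …, n`, pass from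
`V₀` to `V₁` in steps of this kind.
-/

open Set

theorem Set.Icc.coe_covBy_coe_iff {X : Type*} [Preorder X] {a b : X} {x y : Icc a b} :
    (x : X) ⋖ (y : X) ↔ x ⋖ y :=
  OrdConnected.apply_covBy_apply_iff (OrderEmbedding.subtype (· ∈ Icc a b))
    (by rw [OrderEmbedding.coe_subtype, Subtype.range_coe]; exact ordConnected_Icc)

theorem Set.strictMono_inclusion {X : Type*} [Preorder X] {s t : Set X} (h : s ⊆ t) :
    StrictMono (inclusion h) :=
  fun _ _ => (inclusion_lt_inclusion h).2

theorem CompositionSeries.exists_of_wellFoundedLT_Icc {X : Type*} [Lattice X]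
    [IsModularLattice X] {a c : X} (hac : a ≤ c) [WellFoundedLT (Icc a c)]
    [WellFoundedGT (Icc a c)] : ∃ s : CompositionSeries X, s.head = a ∧ s.last = c := by
  have : Nonempty (Icc a c) := ⟨⟨a, le_rfl, hac⟩⟩
  obtain ⟨f, hmin, n, hmax, hcov⟩ := exists_covBy_seq_of_wellFoundedLT_wellFoundedGT (Icc a c)
  refine ⟨⟨n, fun i => f i, fun i => Icc.coe_covBy_coe_iff.2 (hcov i i.2)⟩, ?_, ?_⟩
  · exact le_antisymm (hmin (show ⟨a, le_rfl, hac⟩ ≤ f 0 from (f 0).2.1)) (f 0).2.1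
  · exact le_antisymm (f n).2.2 (hmax (show f n ≤ ⟨c, hac, le_rfl⟩ from (f n).2.2))

theorem Fin.clamp_of_le {i n : ℕ} (h : i ≤ n) : Fin.clamp i n = ⟨i, Nat.lt_succ_of_le h⟩ :=
  Fin.ext (min_eq_left h)

namespace Submodule

variable {S M N : Type*} [Ring S] [AddCommGroup M] [Module S M] [AddCommGroup N] [Module S N]

abbrev Subquotient (p q : Submodule S M) : Type _ := ↥q ⧸ p.comap q.subtype

def subquotientOrderIsoIcc {p q : Submodule S M} (hpq : p ≤ q) :
    Submodule S (Subquotient p q) ≃o Icc p q where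
  toFun X := ⟨(X.comap (mkQ _)).map q.subtype, fun x hx =>
    ⟨⟨x, hpq hx⟩, le_comap_mkQ _ X (show _ ∈ p.comap q.subtype from hx), rfl⟩,
    map_subtype_le _ _⟩
  invFun W := (W.1.comap q.subtype).map (mkQ _)
  left_inv X := by
    simp only [comap_map_eq_of_injective q.injective_subtype]
    exact map_comap_eq_self (by simp)
  right_inv W := by
    refine Subtype.ext ?_
    simp only [comap_map_mkQ]
    rw [sup_eq_right.2 (comap_mono W.2.1), map_comap_subtype, inf_eq_right.2 W.2.2]
  map_rel_iff' {X Y} := by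
    change map _ _ ≤ map _ _ ↔ _
    rw [map_le_map_iff_of_injective q.injective_subtype]
    exact (comapMkQRelIso _).map_rel_iff'

noncomputable def subquotientEquivMap {f : M →ₗ[S] N} (hf : Function.Injective f)
    (p q : Submodule S M) : Subquotient p q ≃ₗ[S] Subquotient (p.map f) (q.map f) :=
  Quotient.equiv _ _ (equivMapOfInjective f hf q) <| by
    ext ⟨_, y, hy, rfl⟩
    have : (equivMapOfInjective f hf q).symm ⟨f y, y, hy, rfl⟩ = ⟨y, hy⟩ :=
      (LinearEquiv.symm_apply_eq _).2 rfl
    simp [this, hf.eq_iff]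

def SubquotientIso (X : Submodule S M × Submodule S M) (Y : Submodule S N × Submodule S N) :
    Prop :=
  Nonempty (Subquotient X.1 X.2 ≃ₗ[S] Subquotient Y.1 Y.2)

end Submodule

namespace CompositionSeries

open Submodule

variable {S M N : Type*} [Ring S] [AddCommGroup M] [Module S M] [AddCommGroup N] [Module S N]

theorem isFiniteLength_subquotient (s : CompositionSeries (Submodule S M)) :
    IsFiniteLength S (Subquotient s.head s.last) := by
  let e := (subquotientOrderIsoIcc (show s.head ≤ s.last from s.head_le _)).symm
  refine isFiniteLength_of_exists_compositionSeries
    ⟨⟨s.length, fun i => e ⟨s i, s.head_le i, s.le_last i⟩, fun i => ?_⟩, ?_, ?_⟩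
  · exact (apply_covBy_apply_iff e).2 (Icc.coe_covBy_coe_iff.1 (s.step i))
  · exact e.map_bot' (fun x => x.2.1) (fun _ => bot_le)
  · exact e.map_top' (fun x => x.2.2) (fun _ => le_top)

theorem wellFoundedLT_Icc (s : CompositionSeries (Submodule S M)) :
    WellFoundedLT (Icc s.head s.last) := by
  have := (isFiniteLength_iff_isNoetherian_isArtinian.1 s.isFiniteLength_subquotient).2
  exact (subquotientOrderIsoIcc (show s.head ≤ s.last from s.head_le _)).symm.strictMono
    |>.wellFoundedLT

theorem wellFoundedGT_Icc (s : CompositionSeries (Submodule S M)) :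
    WellFoundedGT (Icc s.head s.last) := by
  have := (isFiniteLength_iff_isNoetherian_isArtinian.1 s.isFiniteLength_subquotient).1
  exact (subquotientOrderIsoIcc (show s.head ≤ s.last from s.head_le _)).symm.strictMono
    |>.wellFoundedGT

/-- Unlike `CompositionSeries.Equivalent`, whose lattice-theoretic `JordanHolderLattice.Iso`
cannot see isomorphisms induced by a linear map such as `μ`, factors are matched here by arbitrary
linear isomorphisms. -/
def FactorEquivalent (s : CompositionSeries (Submodule S M))
    (t : CompositionSeries (Submodule S N)) : Prop :=
  ∃ f : Fin s.length ≃ Fin t.length, ∀ i,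
    SubquotientIso (s i.castSucc, s i.succ) (t (f i).castSucc, t (f i).succ)

theorem Equivalent.factorEquivalent {s t : CompositionSeries (Submodule S M)}
    (h : s.Equivalent t) : s.FactorEquivalent t :=
  let ⟨f, hf⟩ := h
  ⟨f, fun i => ⟨(hf i).linearEquiv⟩⟩

theorem FactorEquivalent.trans {P : Type*} [AddCommGroup P] [Module S P]
    {s : CompositionSeries (Submodule S M)} {t : CompositionSeries (Submodule S N)}
    {u : CompositionSeries (Submodule S P)} (h₁ : s.FactorEquivalent t)
    (h₂ : t.FactorEquivalent u) : s.FactorEquivalent u :=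
  let ⟨f, hf⟩ := h₁
  let ⟨g, hg⟩ := h₂
  ⟨f.trans g, fun i => ⟨(hf i).some.trans (hg (f i)).some⟩⟩

theorem FactorEquivalent.length_eq {s : CompositionSeries (Submodule S M)}
    {t : CompositionSeries (Submodule S N)} (h : s.FactorEquivalent t) : s.length = t.length :=
  Fin.equiv_iff_eq.1 ⟨h.choose⟩

theorem FactorEquivalent.smash_swap {s₁ s₂ : CompositionSeries (Submodule S M)}
    {t₁ t₂ : CompositionSeries (Submodule S N)} (hs : s₁.last = s₂.head)
    (ht : t₂.last = t₁.head) (h₁ : s₁.FactorEquivalent t₁)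
    (h₂ : s₂.FactorEquivalent t₂) :
    FactorEquivalent (s₁.smash s₂ hs) (t₂.smash t₁ ht) := by
  obtain ⟨f₁, hf₁⟩ := h₁
  obtain ⟨f₂, hf₂⟩ := h₂
  let e := finSumFinEquiv.symm.trans ((f₁.sumCongr f₂).trans
    ((Equiv.sumComm _ _).trans finSumFinEquiv))
  refine ⟨e, fun i => Fin.addCases (fun i => ?_) (fun i => ?_) i⟩
  · have he : e (Fin.castAdd _ i) = Fin.natAdd _ (f₁ i) := by simp [e]
    have := hf₁ i
    rw [← RelSeries.smash_castAdd hs, ← RelSeries.smash_succ_castAdd hs,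
      ← RelSeries.smash_natAdd ht, ← RelSeries.smash_succ_natAdd ht, ← he] at this
    exact this
  · have he : e (Fin.natAdd _ i) = Fin.castAdd _ (f₂ i) := by simp [e]
    have := hf₂ i
    rw [← RelSeries.smash_natAdd hs, ← RelSeries.smash_succ_natAdd hs,
      ← RelSeries.smash_castAdd ht, ← RelSeries.smash_succ_castAdd ht, ← he] at this
    exact this

def map (s : CompositionSeries (Submodule S M)) {f : M →ₗ[S] N} (hf : Function.Injective f) :
    CompositionSeries (Submodule S N) :=
  RelSeries.map s ⟨Submodule.map f, fun h => map_covBy_of_injective hf h⟩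

theorem map_factorEquivalent (s : CompositionSeries (Submodule S M)) {f : M →ₗ[S] N}
    (hf : Function.Injective f) : (s.map hf).FactorEquivalent s :=
  ⟨Equiv.refl _, fun _ => ⟨(subquotientEquivMap hf _ _).symm⟩⟩

theorem exists_of_le_of_le (s : CompositionSeries (Submodule S M)) {b : Submodule S M}
    (h₁ : s.head ≤ b) (h₂ : b ≤ s.last) :
    (∃ t : CompositionSeries (Submodule S M), t.head = s.head ∧ t.last = b) ∧
      ∃ t : CompositionSeries (Submodule S M), t.head = b ∧ t.last = s.last := by
  have := s.wellFoundedLT_Icc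
  have := s.wellFoundedGT_Icc
  have hsub₁ : Icc s.head b ⊆ Icc s.head s.last := Icc_subset_Icc le_rfl h₂
  have hsub₂ : Icc b s.last ⊆ Icc s.head s.last := Icc_subset_Icc h₁ le_rfl
  have : WellFoundedLT (Icc s.head b) := (strictMono_inclusion hsub₁).wellFoundedLT
  have : WellFoundedGT (Icc s.head b) := (strictMono_inclusion hsub₁).wellFoundedGT
  have : WellFoundedLT (Icc b s.last) := (strictMono_inclusion hsub₂).wellFoundedLT
  have : WellFoundedGT (Icc b s.last) := (strictMono_inclusion hsub₂).wellFoundedGT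
  exact ⟨exists_of_wellFoundedLT_Icc h₁, exists_of_wellFoundedLT_Icc h₂⟩

theorem exists_of_map_of_injective {f : M →ₗ[S] N} (hf : Function.Injective f)
    {p q : Submodule S M} (hpq : p ≤ q) (s : CompositionSeries (Submodule S N))
    (hs₀ : s.head = p.map f) (hs₁ : s.last = q.map f) :
    ∃ t : CompositionSeries (Submodule S M), t.head = p ∧ t.last = q := by
  have : WellFoundedLT (Icc (p.map f) (q.map f)) := hs₀ ▸ hs₁ ▸ s.wellFoundedLT_Icc
  have : WellFoundedGT (Icc (p.map f) (q.map f)) := hs₀ ▸ hs₁ ▸ s.wellFoundedGT_Icc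
  have hmap : StrictMono fun x : Icc p q =>
      (⟨x.1.map f, map_mono x.2.1, map_mono x.2.2⟩ : Icc (p.map f) (q.map f)) :=
    fun _ _ h => map_strictMono_of_injective hf h
  have : WellFoundedLT (Icc p q) := hmap.wellFoundedLT
  have : WellFoundedGT (Icc p q) := hmap.wellFoundedGT
  exact exists_of_wellFoundedLT_Icc hpq

theorem exists_factorEquivalent_of_map_le {μ : M →ₗ[S] M} (hμ : Function.Injective μ)
    {U W : Submodule S M} (hUW : U ≤ W) (hWU : W.map μ ≤ U)
    (s : CompositionSeries (Submodule S M)) (hs₀ : s.head = U.map μ) (hs₁ : s.last = U) :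
    ∃ t : CompositionSeries (Submodule S M), t.head = W.map μ ∧ t.last = W ∧
      s.FactorEquivalent t := by
  obtain ⟨⟨u', hu'₀, hu'₁⟩, ⟨v, hv₀, hv₁⟩⟩ :=
    s.exists_of_le_of_le (hs₀ ▸ map_mono hUW) (hs₁ ▸ hWU)
  obtain ⟨u, hu₀, hu₁⟩ := exists_of_map_of_injective hμ hUW u' (hu'₀.trans hs₀) hu'₁
  have huv : (u.map hμ).last = v.head := by simp [map, hu₁, hv₀]
  have hvu : v.last = u.head := by rw [hv₁, hs₁, hu₀]
  refine ⟨v.smash u hvu, by simpa using hv₀, by simpa using hu₁, ?_⟩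
  have hs : s.Equivalent ((u.map hμ).smash v huv) :=
    jordan_holder _ _ (by simp [map, hs₀, hu₀]) (by simp [hv₁])
  exact hs.factorEquivalent.trans
    (FactorEquivalent.smash_swap huv hvu (u.map_factorEquivalent hμ)
      (Equivalent.refl v).factorEquivalent)

theorem exists_factorEquivalent_of_le_comap_pow {μ : M →ₗ[S] M} (hμ : Function.Injective μ)
    (hμp : ∀ p : Submodule S M, p ≤ p.comap μ) (n : ℕ) {W₀ W₁ : Submodule S M}
    (h01 : W₀ ≤ W₁) (hexp : W₁ ≤ W₀.comap (μ ^ n))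
    (s : CompositionSeries (Submodule S M)) (hs₀ : s.head = W₀.map μ) (hs₁ : s.last = W₀) :
    ∃ t : CompositionSeries (Submodule S M), t.head = W₁.map μ ∧ t.last = W₁ ∧
      s.FactorEquivalent t := by
  induction n generalizing W₁ with
  | zero =>
    obtain rfl : W₁ = W₀ := le_antisymm hexp h01
    exact ⟨s, hs₀, hs₁, (Equivalent.refl s).factorEquivalent⟩
  | succ n ih =>
    set U := W₀.comap (μ ^ n) ⊓ W₁
    have hW₀U : W₀ ≤ U := le_inf (W₀.le_comap_pow_of_le_comap (hμp W₀) n) h01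
    have hW₁U : W₁.map μ ≤ U := by
      rw [map_le_iff_le_comap, comap_inf, ← comap_comp, ← Module.End.mul_eq_comp, ← pow_succ]
      exact le_inf hexp (hμp W₁)
    obtain ⟨u, hu₀, hu₁, hsu⟩ := ih hW₀U inf_le_left
    obtain ⟨t, ht₀, ht₁, hut⟩ :=
      exists_factorEquivalent_of_map_le hμ inf_le_right hW₁U u hu₀ hu₁
    exact ⟨t, ht₀, ht₁, hsu.trans hut⟩

end CompositionSeries

theorem isSMulRegular_of_fractionRing {R V : Type*} [CommRing R] [IsDomain R] [AddCommGroup V]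
    [Module R V] [Module (FractionRing R) V] [IsScalarTower R (FractionRing R) V] {r : R}
    (hr : r ≠ 0) : IsSMulRegular V r :=
  (isSMulRegular_algebraMap_iff (FractionRing R)).1 <| IsUnit.isSMulRegular V <|
    IsLocalization.map_units (FractionRing R) ⟨r, mem_nonZeroDivisors_of_ne_zero hr⟩

theorem Submodule.le_comap_algebraMap_end {R A M : Type*} [CommSemiring R] [Semiring A]
    [Algebra R A] [AddCommMonoid M] [Module A M] [Module R M] [IsScalarTower R A M]
    (p : Submodule A M) (r : R) : p ≤ p.comap (algebraMap R (Module.End A M) r) :=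
  fun _ hx => p.smul_of_tower_mem r hx

section InvariantSubmodules

open Submodule
open scoped MonoidAlgebra Pointwise

variable {R V H : Type*} [CommRing R] [AddCommGroup V] [Module R V] [Monoid H]
  [DistribMulAction H V] [SMulCommClass H R V]

local notation "ρ" => Representation.ofDistribMulAction R H V

theorem mem_invtSubmodule_ofDistribMulAction_iff {W : Submodule R V} :
    W ∈ (ρ).invtSubmodule ↔ SubInvariant H W := by
  simp only [Representation.mem_invtSubmodule, Module.End.mem_invtSubmodule, SubInvariant]
  rfl

theorem mem_mapSubmodule_ofDistribMulAction_iff {P : (ρ).invtSubmodule} {x : (ρ).asModule} :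
    x ∈ (ρ).mapSubmodule P ↔ (ρ).asModuleEquiv x ∈ (P : Submodule R V) :=
  ⟨fun ⟨_, hy, e⟩ => e ▸ hy, fun hx => ⟨x, hx, rfl⟩⟩

theorem covBy_invtSubmodule_ofDistribMulAction_iff {P Q : (ρ).invtSubmodule} :
    P ⋖ Q ↔ (P : Submodule R V) < Q ∧
      ∀ T : Submodule R V, SubInvariant H T → P ≤ T → T ≤ Q → T = P ∨ T = Q := by
  rw [covBy_iff_lt_and_eq_or_eq]
  refine and_congr Iff.rfl ⟨fun h T hT h₁ h₂ => ?_, fun h c h₁ h₂ => ?_⟩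
  · have := h ⟨T, mem_invtSubmodule_ofDistribMulAction_iff.2 hT⟩ h₁ h₂
    rwa [Subtype.ext_iff, Subtype.ext_iff] at this
  · rw [Subtype.ext_iff, Subtype.ext_iff]
    exact h c (mem_invtSubmodule_ofDistribMulAction_iff.1 c.2) h₁ h₂

theorem IsInvariantCompChain.exists_compositionSeries {P Q : (ρ).invtSubmodule} {N : ℕ}
    {C : ℕ → Submodule R V} (hC : IsInvariantCompChain H (P : Submodule R V) Q N C) :
    ∃ s : CompositionSeries (Submodule R[H] (ρ).asModule),
      s.head = (ρ).mapSubmodule P ∧ s.last = (ρ).mapSubmodule Q := by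
  obtain ⟨h₀, hN, hinv, hstep⟩ := hC
  let D : ℕ → (ρ).invtSubmodule := fun i =>
    if hi : i ≤ N then ⟨C i, mem_invtSubmodule_ofDistribMulAction_iff.2 (hinv i hi)⟩ else P
  have hD : ∀ i ≤ N, (D i : Submodule R V) = C i := fun i hi => by simp [D, hi]
  refine ⟨⟨N, fun i => (ρ).mapSubmodule (D i), fun i => ?_⟩, ?_, ?_⟩
  · change (ρ).mapSubmodule _ ⋖ (ρ).mapSubmodule _
    rw [apply_covBy_apply_iff, covBy_invtSubmodule_ofDistribMulAction_iff, Fin.val_castSucc,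
      Fin.val_succ, hD _ i.2.le, hD _ i.2]
    exact hstep i i.2
  · exact congrArg (ρ).mapSubmodule (Subtype.ext ((hD 0 N.zero_le).trans h₀))
  · exact congrArg (ρ).mapSubmodule (Subtype.ext ((hD N le_rfl).trans hN))

/-- Beyond index `s.length` the chain stays at `s.last`. -/
noncomputable def CompositionSeries.toInvariantChain
    (s : CompositionSeries (Submodule R[H] (ρ).asModule)) (i : ℕ) : Submodule R V :=
  (ρ).mapSubmodule.symm (s (Fin.clamp i s.length))

theorem CompositionSeries.isInvariantCompChain_toInvariantChain
    {s : CompositionSeries (Submodule R[H] (ρ).asModule)} {P Q : (ρ).invtSubmodule}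
    (hs₀ : s.head = (ρ).mapSubmodule P) (hs₁ : s.last = (ρ).mapSubmodule Q) :
    IsInvariantCompChain H (P : Submodule R V) Q s.length s.toInvariantChain := by
  refine ⟨?_, ?_, fun i _ => mem_invtSubmodule_ofDistribMulAction_iff.1 (Subtype.prop _),
    fun i hi => ?_⟩
  · rw [toInvariantChain, Fin.clamp_of_le s.length.zero_le]
    exact congrArg Subtype.val (((ρ).mapSubmodule.symm_apply_eq).2 hs₀)
  · rw [toInvariantChain, Fin.clamp_eq_last _ _ le_rfl]
    exact congrArg Subtype.val (((ρ).mapSubmodule.symm_apply_eq).2 hs₁)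
  · rw [toInvariantChain, toInvariantChain, Fin.clamp_of_le hi.le, Fin.clamp_of_le hi,
      ← covBy_invtSubmodule_ofDistribMulAction_iff, apply_covBy_apply_iff]
    exact s.step ⟨i, hi⟩

noncomputable def subquotientEquivMapSubmodule (P Q : (ρ).invtSubmodule) :
    Subquotient (P : Submodule R V) Q ≃ₗ[R]
      Subquotient ((ρ).mapSubmodule P) ((ρ).mapSubmodule Q) :=
  let ι : ↥(Q : Submodule R V) ≃ₗ[R] ↥((ρ).mapSubmodule Q) :=
    { toFun x := ⟨(ρ).asModuleEquiv.symm x, mem_mapSubmodule_ofDistribMulAction_iff.2 x.2⟩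
      invFun y := ⟨(ρ).asModuleEquiv y, mem_mapSubmodule_ofDistribMulAction_iff.1 y.2⟩
      map_add' _ _ := rfl
      map_smul' _ _ := rfl }
  (Quotient.equiv _
    (((ρ).mapSubmodule P).comap ((ρ).mapSubmodule Q).subtype |>.restrictScalars R) ι (by
      ext ⟨x, hx⟩
      refine ⟨fun ⟨a, ha, h⟩ => ?_, fun h =>
        ⟨⟨(ρ).asModuleEquiv x, mem_mapSubmodule_ofDistribMulAction_iff.1 hx⟩, ?_, rfl⟩⟩
      · rw [← h]
        exact mem_mapSubmodule_ofDistribMulAction_iff.2 ha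
      · exact mem_mapSubmodule_ofDistribMulAction_iff.1 h)).trans
    (Quotient.restrictScalarsEquiv R _)

theorem subquotientEquivMapSubmodule_mk (P Q : (ρ).invtSubmodule) (x : (Q : Submodule R V)) :
    subquotientEquivMapSubmodule P Q (Submodule.Quotient.mk x) =
      Submodule.Quotient.mk
        ⟨(ρ).asModuleEquiv.symm x, mem_mapSubmodule_ofDistribMulAction_iff.2 x.2⟩ :=
  rfl

theorem subquotientEquivMapSubmodule_mk_smul (P Q : (ρ).invtSubmodule) (h : H)
    (x : (Q : Submodule R V)) (hx : h • (x : V) ∈ (Q : Submodule R V)) :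
    subquotientEquivMapSubmodule P Q (Submodule.Quotient.mk ⟨h • (x : V), hx⟩) =
      MonoidAlgebra.of R H h • subquotientEquivMapSubmodule P Q (Submodule.Quotient.mk x) := by
  rw [subquotientEquivMapSubmodule_mk, subquotientEquivMapSubmodule_mk,
    ← Submodule.Quotient.mk_smul]
  congr 1
  exact Subtype.ext (Representation.asModuleEquiv_symm_map_rho _ h (x : V))

theorem factorHIso_of_subquotientIso {P₁ P₁' P₂ P₂' : (ρ).invtSubmodule}
    (hiso : SubquotientIso ((ρ).mapSubmodule P₁, (ρ).mapSubmodule P₁')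
      ((ρ).mapSubmodule P₂, (ρ).mapSubmodule P₂'))
    (h₁ : ∀ h : H, ∀ x ∈ (P₁' : Submodule R V), h • x ∈ (P₁' : Submodule R V))
    (h₂ : ∀ h : H, ∀ x ∈ (P₂' : Submodule R V), h • x ∈ (P₂' : Submodule R V)) :
    FactorHIso H (P₁ : Submodule R V) P₁' P₂ P₂' h₁ h₂ := by
  obtain ⟨g⟩ := hiso
  refine ⟨(subquotientEquivMapSubmodule P₁ P₁').trans
    ((g.restrictScalars R).trans (subquotientEquivMapSubmodule P₂ P₂').symm),
    fun h x y hxy => ?_⟩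
  rw [LinearEquiv.trans_apply, LinearEquiv.trans_apply, LinearEquiv.symm_apply_eq] at hxy ⊢
  rw [subquotientEquivMapSubmodule_mk_smul, subquotientEquivMapSubmodule_mk_smul,
    LinearEquiv.restrictScalars_apply, map_smul, ← hxy]
  rfl

theorem exists_invariantCompChains_of_factorEquivalent {P₀ Q₀ P₁ Q₁ : (ρ).invtSubmodule}
    {s t : CompositionSeries (Submodule R[H] (ρ).asModule)}
    (hs₀ : s.head = (ρ).mapSubmodule P₀) (hs₁ : s.last = (ρ).mapSubmodule Q₀)
    (ht₀ : t.head = (ρ).mapSubmodule P₁) (ht₁ : t.last = (ρ).mapSubmodule Q₁)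
    (hst : s.FactorEquivalent t) :
    ∃ (N : ℕ) (C C' : ℕ → Submodule R V)
        (hC : IsInvariantCompChain H (P₀ : Submodule R V) Q₀ N C)
        (hC' : IsInvariantCompChain H (P₁ : Submodule R V) Q₁ N C')
        (perm : Equiv.Perm (Fin N)),
        ∀ i : Fin N,
          FactorHIso H (C (perm i)) (C ((perm i : ℕ) + 1)) (C' i) (C' ((i : ℕ) + 1))
            (hC.2.2.1 ((perm i : ℕ) + 1) (Nat.succ_le_of_lt (perm i).isLt))
            (hC'.2.2.1 ((i : ℕ) + 1) (Nat.succ_le_of_lt i.isLt)) := by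
  have hlen : t.length = s.length := hst.length_eq.symm
  obtain ⟨f, hf⟩ := hst
  refine ⟨s.length, s.toInvariantChain, t.toInvariantChain,
    CompositionSeries.isInvariantCompChain_toInvariantChain hs₀ hs₁,
    hlen ▸ CompositionSeries.isInvariantCompChain_toInvariantChain ht₀ ht₁,
    (f.trans (finCongr hlen)).symm, fun i => ?_⟩
  set j := (f.trans (finCongr hlen)).symm i
  have hfj : f j = Fin.cast hlen.symm i := by simp [j]
  apply factorHIso_of_subquotientIso
  rw [OrderIso.apply_symm_apply, OrderIso.apply_symm_apply, OrderIso.apply_symm_apply,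
    OrderIso.apply_symm_apply, Fin.clamp_of_le j.2.le, Fin.clamp_of_le j.2,
    Fin.clamp_of_le (i.2.le.trans_eq hlen.symm), Fin.clamp_of_le (i.2.trans_eq hlen.symm)]
  have := hf j
  rw [hfj] at this
  exact this

theorem ideal_span_singleton_smul_mem_invtSubmodule (r : R) {P : Submodule R V}
    (hP : P ∈ (ρ).invtSubmodule) : Ideal.span {r} • P ∈ (ρ).invtSubmodule := by
  rw [mem_invtSubmodule_ofDistribMulAction_iff] at hP ⊢
  intro h x hx
  rw [ideal_span_singleton_smul, mem_smul_pointwise_iff_exists] at hx ⊢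
  obtain ⟨y, hy, rfl⟩ := hx
  exact ⟨h • y, hP h y hy, (smul_comm h r y).symm⟩

theorem mapSubmodule_ideal_span_singleton_smul (r : R) (P : (ρ).invtSubmodule) :
    (ρ).mapSubmodule ⟨Ideal.span {r} • (P : Submodule R V),
        ideal_span_singleton_smul_mem_invtSubmodule r P.2⟩ =
      ((ρ).mapSubmodule P).map (algebraMap R (Module.End R[H] (ρ).asModule) r) := by
  ext x
  rw [mem_mapSubmodule_ofDistribMulAction_iff]
  simp only [ideal_span_singleton_smul, mem_smul_pointwise_iff_exists, mem_map,
    mem_mapSubmodule_ofDistribMulAction_iff, Module.algebraMap_end_apply]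
  exact Iff.rfl

end InvariantSubmodules

theorem lattice_reductions_have_isomorphic_semisimplifications_general
    (R : Type*) [CommRing R] [IsDomain R]
    (ϖ : R) (hϖ : Irreducible ϖ)
    (V : Type*) [AddCommGroup V] [Module R V] [Module (FractionRing R) V]
    [IsScalarTower R (FractionRing R) V]
    (H : Type*) [Group H] [DistribMulAction H V]
    [SMulCommClass R H V]
    (V₀ V₁ : Submodule R V)
    (hinv₀ : SubInvariant H V₀) (hinv₁ : SubInvariant H V₁)
    (hlen : ∃ (N : ℕ) (C : ℕ → Submodule R V),
      IsInvariantCompChain H ((Ideal.span {ϖ}) • V₀) V₀ N C)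
    (h01 : V₀ ≤ V₁) (nn : ℕ) (hexp : ∀ x ∈ V₁, ϖ ^ nn • x ∈ V₀) :
    (Ideal.span {ϖ ^ nn}) • V₁ ≤ V₀
    ∧ ∃ (N : ℕ) (C C' : ℕ → Submodule R V)
        (hC : IsInvariantCompChain H ((Ideal.span {ϖ}) • V₀) V₀ N C)
        (hC' : IsInvariantCompChain H ((Ideal.span {ϖ}) • V₁) V₁ N C')
        (perm : Equiv.Perm (Fin N)),
        ∀ i : Fin N,
          FactorHIso H (C (perm i)) (C ((perm i : ℕ) + 1)) (C' i) (C' ((i : ℕ) + 1))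
            (hC.2.2.1 ((perm i : ℕ) + 1) (Nat.succ_le_of_lt (perm i).isLt))
            (hC'.2.2.1 ((i : ℕ) + 1) (Nat.succ_le_of_lt i.isLt)) := by
  refine ⟨?_, ?_⟩
  · rw [Submodule.ideal_span_singleton_smul]
    rintro _ ⟨x, hx, rfl⟩
    exact hexp x hx
  have : SMulCommClass H R V := .symm R H V
  let ρ := Representation.ofDistribMulAction R H V
  let P₀ : ρ.invtSubmodule := ⟨V₀, mem_invtSubmodule_ofDistribMulAction_iff.2 hinv₀⟩
  let P₁ : ρ.invtSubmodule := ⟨V₁, mem_invtSubmodule_ofDistribMulAction_iff.2 hinv₁⟩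
  let μ := algebraMap R (Module.End (MonoidAlgebra R H) ρ.asModule) ϖ
  have hμ : Function.Injective μ := isSMulRegular_of_fractionRing (V := V) hϖ.ne_zero
  have hexp' : ρ.mapSubmodule P₁ ≤ (ρ.mapSubmodule P₀).comap (μ ^ nn) := fun x hx => by
    rw [Submodule.mem_comap, ← map_pow, Module.algebraMap_end_apply,
      mem_mapSubmodule_ofDistribMulAction_iff]
    exact hexp _ (mem_mapSubmodule_ofDistribMulAction_iff.1 hx)
  obtain ⟨N, C, hC⟩ := hlen
  obtain ⟨s, hs₀, hs₁⟩ := IsInvariantCompChain.exists_compositionSeries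
    (P := ⟨_, ideal_span_singleton_smul_mem_invtSubmodule ϖ P₀.2⟩) (Q := P₀) hC
  obtain ⟨t, ht₀, ht₁, hst⟩ := CompositionSeries.exists_factorEquivalent_of_le_comap_pow hμ
    (fun p => p.le_comap_algebraMap_end ϖ) nn (ρ.mapSubmodule.monotone h01) hexp' s
    (hs₀.trans (mapSubmodule_ideal_span_singleton_smul ϖ P₀)) hs₁
  exact exists_invariantCompChains_of_factorEquivalent hs₀ hs₁
    (ht₀.trans (mapSubmodule_ideal_span_singleton_smul ϖ P₁).symm) ht₁ hst

/-- Let `R` be a complete discrete valuation ring with uniformizer `ϖ` and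
fraction field `K`, let `V` be a `K`-vector space with a `K`-linear action of a group `H`,
and let `V₀ ⊆ V₁` be two `ϖ`-adically separated `H`-invariant `R`-lattices in `V` such that
`V₀/ϖV₀` has finite length as an `R/ϖ[H]`-module (it admits a finite composition chain of
invariant submodules).  If `V₁/V₀` is of bounded exponent, say killed by `ϖ^nn`, then
`ϖ^nn V₁ ⊆ V₀ ⊆ V₁`, the reductions `V₀/ϖV₀` and `V₁/ϖV₁` have the same finite length,
and their semisimplifications are isomorphic: both admit composition chains of the same
length `N` whose simple factors match up, under some permutation, by `H`-equivariant
`R`-linear isomorphisms. -/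
theorem lattice_reductions_have_isomorphic_semisimplifications
    (R : Type*) [CommRing R] [IsDomain R] [IsDiscreteValuationRing R]
    [IsAdicComplete (IsLocalRing.maximalIdeal R) R]
    (ϖ : R) (hϖ : Irreducible ϖ)
    (V : Type*) [AddCommGroup V] [Module R V] [Module (FractionRing R) V]
    [IsScalarTower R (FractionRing R) V]
    (H : Type*) [Group H] [DistribMulAction H V]
    [SMulCommClass R H V] [SMulCommClass (FractionRing R) H V]
    (V₀ V₁ : Submodule R V)
    (hinv₀ : SubInvariant H V₀) (hinv₁ : SubInvariant H V₁)
    (hspan₀ : Submodule.span (FractionRing R) (V₀ : Set V) = ⊤)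
    (hspan₁ : Submodule.span (FractionRing R) (V₁ : Set V) = ⊤)
    (hsep₀ : (⨅ m : ℕ, (Ideal.span {ϖ} ^ m) • V₀) = ⊥)
    (hsep₁ : (⨅ m : ℕ, (Ideal.span {ϖ} ^ m) • V₁) = ⊥)
    (hlen : ∃ (N : ℕ) (C : ℕ → Submodule R V),
      IsInvariantCompChain H ((Ideal.span {ϖ}) • V₀) V₀ N C)
    (h01 : V₀ ≤ V₁) (nn : ℕ) (hexp : ∀ x ∈ V₁, ϖ ^ nn • x ∈ V₀) :
    (Ideal.span {ϖ ^ nn}) • V₁ ≤ V₀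
    ∧ ∃ (N : ℕ) (C C' : ℕ → Submodule R V)
        (hC : IsInvariantCompChain H ((Ideal.span {ϖ}) • V₀) V₀ N C)
        (hC' : IsInvariantCompChain H ((Ideal.span {ϖ}) • V₁) V₁ N C')
        (perm : Equiv.Perm (Fin N)),
        ∀ i : Fin N,
          FactorHIso H (C (perm i)) (C ((perm i : ℕ) + 1)) (C' i) (C' ((i : ℕ) + 1))
            (hC.2.2.1 ((perm i : ℕ) + 1) (Nat.succ_le_of_lt (perm i).isLt))
            (hC'.2.2.1 ((i : ℕ) + 1) (Nat.succ_le_of_lt i.isLt)) :=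
  lattice_reductions_have_isomorphic_semisimplifications_general R ϖ hϖ V H V₀ V₁ hinv₀ hinv₁ hlen
    h01 nn hexp
end
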